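/- arXiv:2310.16679 — 9 statements merged into one kernel-verified Lean document; each statement's English description precedes it below -/
import Mathlib

section
/- Let p be a prime and H a finite p-group acting non-trivially on a finite set W. Then there exists a normal subgroup N of H of index p such that at least one H-orbit in W splits into p distinct N-orbits. -/
/-!
The stabilizer of a point `w` that is moved is a proper subgroup of the `p`-group `H`, so by
Sylow it lies in a subgroup `N` of index `p`, which is normal because `p` is the smallest prime
dividing `|H|`. As `N` is normal, `H` permutes the `N`-orbits inside `H • w`, and the stabilizer of
the block `N • w` is `N` itself; hence there are `[H : N] = p` of them.
-/

open MulAction Pointwise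

theorem Subgroup.exists_normal_index_eq_prime_le {G : Type*} [Group G] [Finite G] {p e : ℕ}
    [hp : Fact p.Prime] (hcard : Nat.card G = p ^ e) {S : Subgroup G} (hS : S ≠ ⊤) :
    ∃ N : Subgroup G, N.Normal ∧ N.index = p ∧ S ≤ N := by
  obtain ⟨n, hne, hSn⟩ := (Nat.dvd_prime_pow hp.out).mp (hcard ▸ S.card_subgroup_dvd_card)
  have hn : n < e := hne.lt_of_ne fun h ↦ hS (S.eq_top_of_card_eq (by rw [hSn, h, hcard]))
  obtain ⟨N, hNcard, hSN⟩ := Sylow.exists_subgroup_card_pow_prime_le p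
    (hcard ▸ pow_dvd_pow p (Nat.sub_le e 1)) S hSn (by omega)
  have hindex : N.index = p := by
    have h := N.card_mul_index
    rw [hNcard, hcard, ← Nat.sub_add_cancel (show 1 ≤ e by omega), pow_succ] at h
    exact Nat.eq_of_mul_eq_mul_left (pow_pos hp.out.pos _) h
  refine ⟨N, Subgroup.normal_of_index_eq_minFac_card ?_, hindex, hSN⟩
  rw [hindex, hcard, hp.out.pow_minFac (by omega)]

namespace MulAction

variable {G X : Type*} [Group G] [MulAction G X] (N : Subgroup G) [N.Normal]

theorem setOf_exists_orbit_eq_orbit_orbit (x : X) :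
    {s : Set X | ∃ y ∈ orbit G x, s = orbit N y} = orbit G (orbit N x) := by
  ext s
  constructor
  · rintro ⟨_, ⟨g, rfl⟩, rfl⟩
    exact ⟨g, smul_orbit_eq_orbit_smul N x g⟩
  · rintro ⟨g, rfl⟩
    exact ⟨g • x, mem_orbit x g, smul_orbit_eq_orbit_smul N x g⟩

theorem ncard_setOf_orbit_normal_eq_index {x : X} (hx : stabilizer G x ≤ N) :
    {s : Set X | ∃ y ∈ orbit G x, s = orbit N y}.ncard = N.index := by
  rw [setOf_exists_orbit_eq_orbit_orbit, ← index_stabilizer, stabilizer_orbit_eq hx]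

end MulAction

theorem lem_split_general {p : ℕ} (hp : p.Prime) (H : Type*) [Group H] [Fintype H]
    {e : ℕ} (hcard : Fintype.card H = p ^ e)
    (W : Type*) [MulAction H W]
    (hnontriv : ∃ (h : H) (w : W), h • w ≠ w) :
    ∃ N : Subgroup H, N.Normal ∧ N.index = p ∧
      ∃ w : W, {s : Set W | ∃ v ∈ MulAction.orbit H w, s = MulAction.orbit N v}.ncard = p := by
  have : Fact p.Prime := ⟨hp⟩
  obtain ⟨h, w, hw⟩ := hnontriv
  have hstab : stabilizer H w ≠ ⊤ := fun htop ↦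
    hw (mem_stabilizer_iff.mp (htop ▸ Subgroup.mem_top h))
  obtain ⟨N, hN, hindex, hle⟩ :=
    Subgroup.exists_normal_index_eq_prime_le (Nat.card_eq_fintype_card.trans hcard) hstab
  exact ⟨N, hN, hindex, w, hindex ▸ ncard_setOf_orbit_normal_eq_index N hle⟩

/-- Let `p` be a prime and `H` a finite `p`-group acting non-trivially on a finite set `W`.
Then there exists a normal subgroup `N` of `H` of index `p` such that at least one
`H`-orbit in `W` splits into `p` distinct `N`-orbits. -/
theorem lem_split {p : ℕ} (hp : p.Prime) (H : Type*) [Group H] [Fintype H]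
    {e : ℕ} (hcard : Fintype.card H = p ^ e)
    (W : Type*) [Fintype W] [MulAction H W]
    (hnontriv : ∃ (h : H) (w : W), h • w ≠ w) :
    ∃ N : Subgroup H, N.Normal ∧ N.index = p ∧
      ∃ w : W, {s : Set W | ∃ v ∈ MulAction.orbit H w, s = MulAction.orbit N v}.ncard = p :=
  lem_split_general hp H hcard W hnontriv
end

section
/- Let G be a finite group in which every non-identity element has prime power order, and suppose |G| = p^m q^n for distinct primes p, q. Let P be a nontrivial normal p-subgroup of G of order p^k, and let Q be a subgroup of G of order q^n. Then the conjugation action of Q on P \ {1} is free, and consequently q^n divides p^k - 1. -/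
open MulAction

lemma free_action_card_dvd {H : Type*} [Group H] [Finite H] (X : Type*) [Finite X]
    [MulAction H X] (hfree : ∀ (y : H) (x : X), y • x = x → y = 1) :
    Nat.card H ∣ Nat.card X := by
  classical
  cases isEmpty_or_nonempty X
  · simp
  have := Fintype.ofFinite H
  have := Fintype.ofFinite X
  have hstab : ∀ x : X, stabilizer H x = ⊥ := by
    intro x
    ext y
    simp only [Subgroup.mem_bot, mem_stabilizer_iff]
    exact ⟨fun h => hfree y x h, fun h => by simp [h]⟩
  have hΩ : Fintype (Quotient (orbitRel H X)) := Quotient.fintype _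
  rw [Nat.card_eq_fintype_card, Nat.card_eq_fintype_card,
    card_eq_sum_card_group_div_card_stabilizer H X]
  apply Finset.dvd_sum
  intro ω _
  rw [show Fintype.card (stabilizer H (Quotient.out ω)) = 1 by
    rw [← Nat.card_eq_fintype_card, hstab, Subgroup.card_bot], Nat.div_one]


/-- Let `G` be a finite group in which every non-identity element has prime power order,
with `|G| = p^m * q^n` for distinct primes `p, q`.  Let `P` be a nontrivial normal
`p`-subgroup of order `p^k` and `Q` a subgroup of order `q^n`.  Then the conjugation
action of `Q` on `P \ {1}` is free, and consequently `q^n` divides `p^k - 1`. -/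
theorem higman_divisibility {G : Type*} [Group G] [Fintype G]
    {p q m n k : ℕ} (hp : p.Prime) (hq : q.Prime) (hpq : p ≠ q)
    (horder : ∀ g : G, g ≠ 1 → ∃ (r i : ℕ), r.Prime ∧ orderOf g = r ^ i)
    (hG : Fintype.card G = p ^ m * q ^ n)
    (P : Subgroup G) (hPnormal : P.Normal) (hPcard : Nat.card P = p ^ k) (hk : 1 ≤ k)
    (Q : Subgroup G) (hQcard : Nat.card Q = q ^ n) :
    (∀ y ∈ Q, ∀ x ∈ P, x ≠ 1 → y * x * y⁻¹ = x → y = 1) ∧ q ^ n ∣ p ^ k - 1 := by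
  have key : ∀ y ∈ Q, ∀ x ∈ P, x ≠ 1 → y * x * y⁻¹ = x → y = 1 := by
    intro y hy x hx hx1 hconj
    by_contra hy1
    have hcomm : Commute x y := (mul_inv_eq_iff_eq_mul.mp hconj).symm
    -- order of x is a power of p
    obtain ⟨i, hi, hxo⟩ := (Nat.dvd_prime_pow hp).mp (by
      rw [← hPcard, ← Subgroup.orderOf_mk x hx]
      exact orderOf_dvd_natCard _ : orderOf x ∣ p ^ k)
    obtain ⟨j, hj, hyo⟩ := (Nat.dvd_prime_pow hq).mp (by
      rw [← hQcard, ← Subgroup.orderOf_mk y hy]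
      exact orderOf_dvd_natCard _ : orderOf y ∣ q ^ n)
    have hi1 : 1 ≤ i := by
      rcases Nat.eq_zero_or_pos i with h | h
      · exfalso; apply hx1; rw [← orderOf_eq_one_iff, hxo, h, pow_zero]
      · exact h
    have hj1 : 1 ≤ j := by
      rcases Nat.eq_zero_or_pos j with h | h
      · exfalso; apply hy1; rw [← orderOf_eq_one_iff, hyo, h, pow_zero]
      · exact h
    have hcop : Nat.Coprime (orderOf x) (orderOf y) := by
      rw [hxo, hyo]
      exact Nat.Coprime.pow _ _ ((Nat.coprime_primes hp hq).mpr hpq)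
    have hmul : orderOf (x * y) = p ^ i * q ^ j := by
      rw [Commute.orderOf_mul_eq_mul_orderOf_of_coprime hcomm hcop, hxo, hyo]
    have hgt : 1 < p ^ i * q ^ j := by
      have h1 : 1 < p ^ i := Nat.one_lt_pow (by omega) hp.one_lt
      have h2 : 0 < q ^ j := pow_pos hq.pos j
      calc 1 < p ^ i := h1
        _ ≤ p ^ i * q ^ j := Nat.le_mul_of_pos_right _ h2
    have hne : x * y ≠ 1 := by
      intro h
      rw [← orderOf_eq_one_iff, hmul] at h
      omega
    obtain ⟨r, l, hr, hrl⟩ := horder (x * y) hne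
    rw [hmul] at hrl
    have hpr : p = r := by
      have hd : p ∣ r ^ l := hrl ▸ dvd_mul_of_dvd_left (dvd_pow_self p (by omega : i ≠ 0)) _
      exact (Nat.prime_dvd_prime_iff_eq hp hr).mp (hp.dvd_of_dvd_pow hd)
    have hqr : q = r := by
      have hd : q ∣ r ^ l := hrl ▸ dvd_mul_of_dvd_right (dvd_pow_self q (by omega : j ≠ 0)) _
      exact (Nat.prime_dvd_prime_iff_eq hq hr).mp (hq.dvd_of_dvd_pow hd)
    exact hpq (hpr.trans hqr.symm)
  refine ⟨key, ?_⟩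
  -- set up the action of Q on P \ {1}
  let X := {x : P // x ≠ 1}
  letI : MulAction Q X :=
    { smul := fun y x => ⟨⟨(y : G) * (x : P) * (y : G)⁻¹,
        hPnormal.conj_mem _ (x : P).2 _⟩, by
          intro h
          apply x.2
          have h' : ((y : G) * ((x : P) : G) * (y : G)⁻¹) = 1 := congrArg Subtype.val h
          have h2 : ((x : P) : G) = 1 := by
            have h3 := congrArg (fun z => (y : G)⁻¹ * z * (y : G)) h'
            simpa [mul_assoc] using h3
          exact Subtype.ext h2⟩
      one_smul := fun x => by
        apply Subtype.ext; apply Subtype.ext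
        show ((1 : Q) : G) * _ * ((1 : Q) : G)⁻¹ = _
        simp
      mul_smul := fun y z x => by
        apply Subtype.ext; apply Subtype.ext
        show ((y * z : Q) : G) * _ * ((y * z : Q) : G)⁻¹ =
          (y : G) * ((z : G) * _ * (z : G)⁻¹) * (y : G)⁻¹
        simp [mul_assoc] }
  have hfree : ∀ (y : Q) (x : X), y • x = x → y = 1 := by
    intro y x hyx
    have h1 : (y : G) * ((x : P) : G) * (y : G)⁻¹ = ((x : P) : G) :=
      congrArg (Subtype.val ∘ Subtype.val) hyx
    have hx1 : ((x : P) : G) ≠ 1 := fun h => x.2 (Subtype.ext h)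
    have := key (y : G) y.2 ((x : P) : G) (x : P).2 hx1 h1
    exact Subtype.ext this
  have hdvd := free_action_card_dvd (H := Q) X hfree
  rw [hQcard] at hdvd
  have hX : Nat.card X = p ^ k - 1 := by
    classical
    have h1 : Fintype.card {x : P // ¬ x = 1} = Fintype.card P - Fintype.card {x : P // x = 1} :=
      Fintype.card_subtype_compl _
    rw [Fintype.card_subtype_eq] at h1
    have h2 : Nat.card X = Fintype.card {x : P // ¬ x = 1} := Nat.card_eq_fintype_card
    rw [h2, h1, ← Nat.card_eq_fintype_card, hPcard]
  rwa [hX] at hdvd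
end

section
/- Suppose a nontrivial finite group G acts faithfully and simplicially on a d-pseudomanifold K. Then the fixed point complex K^G has dimension strictly less than d. -/
/-- A finite simplicial complex (given as a downward-closed predicate on vertex sets)
is a `d`-pseudomanifold if every simplex is contained in a `d`-simplex, every
`(d-1)`-simplex lies in exactly two `d`-simplices, and it is strongly connected. -/
def IsPseudomanifold {V : Type*} (K : Set V → Prop) (d : ℕ) : Prop :=
  (∀ σ, K σ → ∃ τ, K τ ∧ σ ⊆ τ ∧ τ.ncard = d + 1) ∧
  (∀ σ, K σ → σ.ncard = d → {τ : Set V | K τ ∧ τ.ncard = d + 1 ∧ σ ⊆ τ}.ncard = 2) ∧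
  (∀ σ τ : Set V, K σ → K τ → σ.ncard = d + 1 → τ.ncard = d + 1 →
    Relation.ReflTransGen
      (fun a b => K a ∧ K b ∧ a.ncard = d + 1 ∧ b.ncard = d + 1 ∧ (a ∩ b).ncard = d) σ τ)

/-- If a nontrivial finite group `G` acts faithfully and simplicially on a
`d`-pseudomanifold `K`, then the fixed point complex `K^G` (whose vertices are the
`G`-orbits that are simplices, and whose simplices are the families of orbits with
union a simplex of `K`) has dimension strictly less than `d`. -/
theorem fixedPointComplex_dim_lt {V : Type*} [Fintype V]
    (K : Set V → Prop) (hdown : ∀ σ τ : Set V, τ ⊆ σ → K σ → K τ)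
    (hvert : ∀ v : V, K {v}) {d : ℕ} (hpm : IsPseudomanifold K d)
    (G : Type*) [Group G] [Fintype G] [Nontrivial G] [MulAction G V]
    [FaithfulSMul G V] (hsimp : ∀ (g : G) (σ : Set V), K σ → K ((fun v => g • v) '' σ)) :
    ¬ ∃ T : Set (Set V), T.ncard = d + 1 ∧
        (∀ s ∈ T, ∃ v : V, s = MulAction.orbit G v) ∧ K (⋃₀ T) := by
  classical
  rintro ⟨T, hTcard, hTorb, hKU⟩
  obtain ⟨τ0, hKτ0, hστ0, hτ0card⟩ := hpm.1 _ hKU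
  haveI : Nonempty V := by
    by_contra h
    obtain ⟨g, hg⟩ := exists_ne (1 : G)
    exact hg (eq_of_smul_eq_smul (M := G) (α := V) fun v => absurd ⟨v⟩ h)
  choose! w hw using hTorb
  have hwmem : ∀ s ∈ T, w s ∈ s := by
    intro s hs
    have h0 : w s ∈ MulAction.orbit G (w s) := MulAction.mem_orbit_self _
    rwa [← hw s hs] at h0
  have hinj : Set.InjOn w T := by
    intro s hs t ht h
    rw [hw s hs, hw t ht, h]
  have himg : w '' T ⊆ ⋃₀ T := by
    rintro x ⟨s, hs, rfl⟩
    exact ⟨s, hs, hwmem s hs⟩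
  have hσle : (⋃₀ T).ncard ≤ d + 1 :=
    hτ0card ▸ Set.ncard_le_ncard hστ0 (Set.toFinite _)
  have himgcard : (w '' T).ncard = d + 1 := by
    rw [Set.ncard_image_of_injOn hinj, hTcard]
  have hσeq : w '' T = ⋃₀ T :=
    Set.eq_of_subset_of_ncard_le himg (by omega) (Set.toFinite _)
  have hσcard : (⋃₀ T).ncard = d + 1 := hσeq ▸ himgcard
  -- every vertex of ⋃₀ T is fixed by every g
  have hfix : ∀ v ∈ ⋃₀ T, ∀ g : G, g • v = v := by
    intro v hv g
    obtain ⟨s, hs, hvs⟩ := hv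
    have hvσ : v ∈ w '' T := hσeq ▸ (show v ∈ ⋃₀ T from ⟨s, hs, hvs⟩)
    obtain ⟨t, ht, hvt⟩ := hvσ
    -- v = w t, and v ∈ s, w t ∈ t, so s = t, hence v = w s
    have hvmem : v ∈ MulAction.orbit G (w s) := (hw s hs) ▸ hvs
    have hst : s = t := by
      rw [hw s hs, hw t ht]
      have h1 : MulAction.orbit G v = MulAction.orbit G (w s) :=
        MulAction.orbit_eq_iff.mpr hvmem
      have h2 : MulAction.orbit G v = MulAction.orbit G (w t) := by
        rw [hvt]
      rw [← h1, h2]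
    have hvws : v = w s := by rw [hst, hvt]
    -- g • v ∈ orbit v = s; also every element of s equals w s = v
    have hgv : g • v ∈ MulAction.orbit G (w s) := by
      rw [← MulAction.orbit_eq_iff.mpr hvmem]
      exact MulAction.mem_orbit _ _
    -- any element b of s equals w s
    have hall : ∀ b ∈ s, b = w s := by
      intro b hb
      have hbσ : b ∈ w '' T := hσeq ▸ (show b ∈ ⋃₀ T from ⟨s, hs, hb⟩)
      obtain ⟨u, hu, hbu⟩ := hbσ
      have hbmem : b ∈ MulAction.orbit G (w s) := (hw s hs) ▸ hb
      have hsu : s = u := by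
        rw [hw s hs, hw u hu]
        have h1 : MulAction.orbit G b = MulAction.orbit G (w s) :=
          MulAction.orbit_eq_iff.mpr hbmem
        have h2 : MulAction.orbit G b = MulAction.orbit G (w u) := by rw [hbu]
        rw [← h1, h2]
      rw [hsu, hbu]
    have hgvs : g • v ∈ s := (hw s hs) ▸ hgv
    rw [hall _ hgvs, hvws]
  -- propagation step along adjacent d-simplices
  have step : ∀ (g : G) (a b : Set V), K a → K b → a.ncard = d + 1 → b.ncard = d + 1 →
      (a ∩ b).ncard = d → (∀ v ∈ a, g • v = v) → ∀ v ∈ b, g • v = v := by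
    intro g a b hKa hKb hca hcb hcab hfa
    have hab : a ≠ b := by
      rintro rfl
      rw [Set.inter_self] at hcab; omega
    have hKc : K (a ∩ b) := hdown a _ Set.inter_subset_left hKa
    have hS := hpm.2.1 _ hKc hcab
    obtain ⟨x, y, hxy, hSxy⟩ := Set.ncard_eq_two.mp hS
    have haS : a ∈ ({x, y} : Set (Set V)) :=
      hSxy ▸ (show a ∈ {τ | K τ ∧ τ.ncard = d + 1 ∧ a ∩ b ⊆ τ} from
        ⟨hKa, hca, Set.inter_subset_left⟩)
    have hbS : b ∈ ({x, y} : Set (Set V)) :=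
      hSxy ▸ (show b ∈ {τ | K τ ∧ τ.ncard = d + 1 ∧ a ∩ b ⊆ τ} from
        ⟨hKb, hcb, Set.inter_subset_right⟩)
    have hgb : (fun v => g • v) '' b ∈ ({x, y} : Set (Set V)) := by
      refine hSxy ▸ (show _ ∈ {τ | K τ ∧ τ.ncard = d + 1 ∧ a ∩ b ⊆ τ} from
        ⟨hsimp g b hKb, ?_, ?_⟩)
      · rw [Set.ncard_image_of_injective _ (MulAction.injective g)]; exact hcb
      · intro v hv
        exact ⟨v, hv.2, hfa v hv.1⟩
    simp only [Set.mem_insert_iff, Set.mem_singleton_iff] at haS hbS hgb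
    have hmem : (fun v => g • v) '' b = a ∨ (fun v => g • v) '' b = b := by
      rcases haS with rfl | rfl <;> rcases hbS with rfl | rfl <;> tauto
    have hga : (fun v => g • v) '' a = a :=
      Set.eq_of_subset_of_ncard_le
        (by rintro _ ⟨v, hv, rfl⟩; show g • v ∈ a; rw [hfa v hv]; exact hv)
        (by rw [Set.ncard_image_of_injective _ (MulAction.injective g)])
        (Set.toFinite _)
    have hgbb : (fun v => g • v) '' b = b := by
      rcases hmem with h | h
      · exact absurd ((Set.image_injective.2 (MulAction.injective g)
          (h.trans hga.symm)).symm) hab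
      · exact h
    intro v hv
    by_cases hvc : v ∈ a ∩ b
    · exact hfa v hvc.1
    · have hsub : a ∩ b ⊆ b := Set.inter_subset_right
      have hdiff : (b \ (a ∩ b)).ncard = 1 := by
        rw [Set.ncard_diff hsub]; omega
      obtain ⟨x0, hx0⟩ := Set.ncard_eq_one.mp hdiff
      have hvx0 : v = x0 := by
        have hmemd : v ∈ b \ (a ∩ b) := ⟨hv, hvc⟩
        rw [hx0] at hmemd; exact hmemd
      have hx0b : x0 ∈ b := by rw [← hvx0]; exact hv
      have hgx0b : g • x0 ∈ b := by
        have : g • x0 ∈ (fun v => g • v) '' b := ⟨x0, hx0b, rfl⟩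
        rwa [hgbb] at this
      have hgx0 : g • x0 = x0 := by
        by_cases h : g • x0 ∈ a ∩ b
        · exact MulAction.injective g (hfa _ h.1)
        · have hmemd : g • x0 ∈ b \ (a ∩ b) := ⟨hgx0b, h⟩
          rw [hx0] at hmemd; exact hmemd
      rw [hvx0]; exact hgx0
  -- every d-simplex is fixed pointwise
  have hchain : ∀ (g : G) (τ : Set V), K τ → τ.ncard = d + 1 → ∀ v ∈ τ, g • v = v := by
    intro g τ hKτ hτc
    have hrel := hpm.2.2 _ τ hKU hKτ hσcard hτc
    clear hKτ hτc
    induction hrel with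
    | refl => exact fun v hv => hfix v hv g
    | tail hcc hstep ih =>
        exact step g _ _ hstep.1 hstep.2.1 hstep.2.2.1 hstep.2.2.2.1 hstep.2.2.2.2 ih
  obtain ⟨g, hg⟩ := exists_ne (1 : G)
  apply hg
  apply eq_of_smul_eq_smul (M := G) (α := V)
  intro v
  obtain ⟨τ, hKτ, hvτ, hτc⟩ := hpm.1 {v} (hvert v)
  rw [one_smul]
  exact hchain g τ hKτ hτc v (hvτ rfl)
end

section
/- Let K be a finite simplicial complex on vertex set V satisfying complementarity (for each subset σ of V, exactly one of σ and V\σ is a simplex of K), and let G be a finite group acting simplicially on K with r orbits on V. If r = 1 then the fixed point complex K^G is empty; if r = 2 then K^G is a single point; if r ≥ 3 then K^G is either the boundaryless (r-2)-simplex on the orbits that are simplices, or K^G has r vertices and itself satisfies complementarity. Moreover K^G is empty or a full simplex if and only if some G-orbit in V is not a simplex of K. -/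
/-- Let `K` be a finite simplicial complex on vertex set `V` satisfying complementarity,
and let `G` act simplicially on `K` with `r` orbits on `V`.  If `r = 1` the fixed point
complex `K^G` is empty; if `r = 2` it is a point; if `r ≥ 3` it is either the full
`(r-2)`-simplex on the `r-1` orbits that are simplices, or it has `r` vertices and itself
satisfies complementarity.  Moreover `K^G` is empty or a full simplex if and only if some
`G`-orbit is not a simplex of `K`. -/
theorem fixedPointComplex_complementarity {V : Type*} [Fintype V]
    (K : Set V → Prop) (hdown : ∀ σ τ : Set V, τ ⊆ σ → K σ → K τ)
    (hcomp : ∀ σ : Set V, K σ ↔ ¬ K σᶜ)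
    (G : Type*) [Group G] [Finite G] [MulAction G V]
    (hsimp : ∀ (g : G) (σ : Set V), K σ → K ((fun v => g • v) '' σ))
    (r : ℕ) (hr : r = Nat.card (MulAction.orbitRel.Quotient G V))
    (Orb : Set (Set V)) (hOrb : Orb = {s : Set V | ∃ v : V, s = MulAction.orbit G v}) :
    (r = 1 → ∀ s ∈ Orb, ¬ K s) ∧
    (r = 2 → ∃! s : Set V, s ∈ Orb ∧ K s) ∧
    (3 ≤ r →
      ({s | s ∈ Orb ∧ K s}.ncard = r - 1 ∧ K (⋃₀ {s | s ∈ Orb ∧ K s})) ∨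
      ((∀ s ∈ Orb, K s) ∧
        ∀ T ⊆ Orb, (K (⋃₀ T) ↔ ¬ K (⋃₀ (Orb \ T))))) ∧
    ((∃ s ∈ Orb, ¬ K s) ↔
      ((∀ s ∈ Orb, ¬ K s) ∨ K (⋃₀ {s | s ∈ Orb ∧ K s}))) := by
  -- basic facts about K
  have hiff : K ∅ ↔ ¬ K Set.univ := by
    have := hcomp ∅; rwa [Set.compl_empty] at this
  have hKempty : K ∅ := by
    by_contra h
    exact h (hdown _ _ (Set.empty_subset _) (not_not.mp (fun hu => h (hiff.mpr hu))))
  have hKuniv : ¬ K Set.univ := hiff.mp hKempty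
  have hVne : Nonempty V := by
    by_contra h
    rw [not_nonempty_iff] at h
    exact hKuniv (by rwa [Set.univ_eq_empty_iff.mpr h])
  -- orbit basics
  have hself : ∀ v : V, v ∈ MulAction.orbit G v := fun v => MulAction.mem_orbit_self v
  have horbmem : ∀ v : V, MulAction.orbit G v ∈ Orb := by
    intro v; rw [hOrb]; exact ⟨v, rfl⟩
  have horb : ∀ s ∈ Orb, ∀ x ∈ s, s = MulAction.orbit G x := by
    intro s hs x hx
    rw [hOrb] at hs; obtain ⟨v, rfl⟩ := hs
    exact (MulAction.orbit_eq_iff.mpr hx).symm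
  -- complement of a union of orbits is the union of the remaining orbits
  have hcompl : ∀ T ⊆ Orb, (⋃₀ T)ᶜ = ⋃₀ (Orb \ T) := by
    intro T hT
    ext x
    simp only [Set.mem_compl_iff, Set.mem_sUnion, not_exists, not_and, Set.mem_diff]
    constructor
    · intro h
      exact ⟨MulAction.orbit G x, ⟨horbmem x, fun hmem => h _ hmem (hself x)⟩, hself x⟩
    · rintro ⟨s, ⟨hsO, hsT⟩, hxs⟩ t htT hxt
      have h1 : s = MulAction.orbit G x := horb s hsO x hxs
      have h2 : t = MulAction.orbit G x := horb t (hT htT) x hxt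
      have hst : s = t := h1.trans h2.symm
      exact hsT (hst ▸ htT)
  have hUorb : ⋃₀ Orb = Set.univ := by
    apply Set.eq_univ_of_forall
    intro x
    exact ⟨MulAction.orbit G x, horbmem x, hself x⟩
  -- Orb is the range of the orbit map on the quotient, hence has cardinality r
  have hrange : Orb = Set.range (MulAction.orbitRel.Quotient.orbit :
      MulAction.orbitRel.Quotient G V → Set V) := by
    rw [hOrb]
    ext s
    constructor
    · rintro ⟨v, rfl⟩
      exact ⟨Quotient.mk'' v, rfl⟩
    · rintro ⟨q, rfl⟩
      induction q using Quotient.inductionOn' with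
      | h v => exact ⟨v, rfl⟩
  have hcard : Orb.ncard = r := by
    rw [hrange, hr, ← Nat.card_coe_set_eq,
      Nat.card_range_of_injective MulAction.orbitRel.Quotient.orbit_injective]
  -- Key dichotomy lemma: if some orbit is not a simplex, then
  -- {s ∈ Orb | K s} = Orb \ {O} and its union is Oᶜ which is a simplex
  have hkey : ∀ O ∈ Orb, ¬ K O →
      ({s | s ∈ Orb ∧ K s} = Orb \ {O} ∧ K (⋃₀ {s | s ∈ Orb ∧ K s})) := by
    intro O hO hKO
    have hKOc : K Oᶜ := not_not.mp (fun h => hKO ((hcomp O).mpr h))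
    have hOc : Oᶜ = ⋃₀ (Orb \ {O}) := by
      have := hcompl {O} (by simpa using hO)
      rwa [Set.sUnion_singleton] at this
    have hset : {s | s ∈ Orb ∧ K s} = Orb \ {O} := by
      ext s
      simp only [Set.mem_setOf_eq, Set.mem_diff, Set.mem_singleton_iff]
      constructor
      · rintro ⟨hs, hKs⟩
        exact ⟨hs, fun h => hKO (h ▸ hKs)⟩
      · rintro ⟨hs, hne⟩
        refine ⟨hs, hdown Oᶜ s ?_ hKOc⟩
        rw [hOc]
        exact Set.subset_sUnion_of_mem ⟨hs, hne⟩
    refine ⟨hset, ?_⟩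
    rw [hset, ← hOc]
    exact hKOc
  refine ⟨?_, ?_, ?_, ?_⟩
  · -- r = 1
    intro h1 s hs
    have : Subsingleton (MulAction.orbitRel.Quotient G V) :=
      (Nat.card_eq_one_iff_unique.mp (h1 ▸ hr).symm).1
    have hsu : s = Set.univ := by
      rw [hOrb] at hs; obtain ⟨v, rfl⟩ := hs
      apply Set.eq_univ_of_forall
      intro x
      have : (Quotient.mk'' x : MulAction.orbitRel.Quotient G V) = Quotient.mk'' v :=
        Subsingleton.elim _ _
      exact Quotient.eq''.mp this
    rw [hsu]; exact hKuniv
  · -- r = 2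
    intro h2
    have h2' : Orb.ncard = 2 := by rw [hcard, h2]
    obtain ⟨a, b, hab, habs⟩ := Set.ncard_eq_two.mp h2'
    have haO : a ∈ Orb := by rw [habs]; exact Set.mem_insert _ _
    have hbO : b ∈ Orb := by rw [habs]; exact Set.mem_insert_of_mem _ rfl
    have hbc : aᶜ = b := by
      have := hcompl {a} (by simpa using haO)
      rw [Set.sUnion_singleton] at this
      rw [this, habs]
      rw [Set.pair_diff_left hab]
      exact Set.sUnion_singleton b
    have hKa : K a ↔ ¬ K b := by rw [← hbc]; exact hcomp a
    by_cases hA : K a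
    · refine ⟨a, ⟨haO, hA⟩, ?_⟩
      rintro s ⟨hs, hKs⟩
      rw [habs] at hs
      rcases hs with rfl | hs
      · rfl
      · rw [Set.mem_singleton_iff] at hs; subst hs
        exact absurd hKs (hKa.mp hA)
    · have hB : K b := not_not.mp (fun h => hA (hKa.mpr h))
      refine ⟨b, ⟨hbO, hB⟩, ?_⟩
      rintro s ⟨hs, hKs⟩
      rw [habs] at hs
      rcases hs with rfl | hs
      · exact (hA hKs).elim
      · rw [Set.mem_singleton_iff] at hs; exact hs
  · -- 3 ≤ r
    intro _
    by_cases hall : ∀ s ∈ Orb, K s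
    · right
      refine ⟨hall, fun T hT => ?_⟩
      rw [hcomp (⋃₀ T), hcompl T hT]
    · left
      push_neg at hall
      obtain ⟨O, hO, hKO⟩ := hall
      obtain ⟨hset, hK⟩ := hkey O hO hKO
      refine ⟨?_, hK⟩
      rw [hset, Set.ncard_diff_singleton_of_mem hO, hcard]
  · -- the final iff
    constructor
    · rintro ⟨O, hO, hKO⟩
      by_cases hall : ∀ s ∈ Orb, ¬ K s
      · exact Or.inl hall
      · exact Or.inr (hkey O hO hKO).2
    · rintro (h | h)
      · obtain ⟨v⟩ := hVne
        exact ⟨MulAction.orbit G v, horbmem v, h _ (horbmem v)⟩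
      · by_contra hc
        push_neg at hc
        have hset : {s | s ∈ Orb ∧ K s} = Orb := by
          ext s; simp only [Set.mem_setOf_eq, and_iff_left_iff_imp]
          exact hc s
        rw [hset, hUorb] at h
        exact hKuniv h
end

section
/- Let K be a finite simplicial complex satisfying complementarity. If K is disconnected, then K is isomorphic to the disjoint union of a point and the boundary of a k-dimensional simplex for some k ≥ 1. -/
/-- Let `K` be a finite simplicial complex (no ghost vertices) satisfying
complementarity.  If `K` is disconnected, then `K` is the disjoint union of a point and
the boundary of a `k`-dimensional simplex for some `k ≥ 1`: there is a vertex `v₀` such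
that, with `B = V \ {v₀}` of cardinality at least `2`, the simplices of `K` are exactly
`{v₀}` and the proper subsets of `B`. -/
theorem complementarity_disconnected {V : Type*} [Fintype V] [DecidableEq V]
    (K : Finset V → Prop)
    (hdown : ∀ σ τ : Finset V, τ ⊆ σ → K σ → K τ)
    (hvert : ∀ v : V, K {v})
    (hcomp : ∀ σ : Finset V, K σ ↔ ¬ K σᶜ)
    (hdisc : ∃ A : Finset V, A ≠ ∅ ∧ A ≠ Finset.univ ∧
      ∀ v ∈ A, ∀ w ∈ Aᶜ, ¬ K {v, w}) :
    ∃ v₀ : V, 2 ≤ (Finset.univ.erase v₀).card ∧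
      ∀ σ : Finset V, K σ ↔
        (σ = {v₀} ∨ (σ ⊆ Finset.univ.erase v₀ ∧ σ ≠ Finset.univ.erase v₀)) := by
  obtain ⟨A, hA0, hAu, hAE⟩ := hdisc
  have hA0' : A.Nonempty := Finset.nonempty_iff_ne_empty.mpr hA0
  have hAc0' : Aᶜ.Nonempty := by
    rw [Finset.nonempty_iff_ne_empty]
    intro h
    apply hAu
    exact (Finset.compl_eq_empty_iff A).mp h
  have key : A.card = 1 ∨ Aᶜ.card = 1 := by
    by_contra h
    push_neg at h
    obtain ⟨h1, h2⟩ := h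
    have hA2 : 1 < A.card := lt_of_le_of_ne hA0'.card_pos (Ne.symm h1)
    have hAc2 : 1 < Aᶜ.card := lt_of_le_of_ne hAc0'.card_pos (Ne.symm h2)
    obtain ⟨v, hv, v', hv', hvv'⟩ := Finset.one_lt_card.mp hA2
    obtain ⟨w, hw, w', hw', hww'⟩ := Finset.one_lt_card.mp hAc2
    have hK1 : ¬ K {v, w} := hAE v hv w hw
    have hK2 : K ({v, w} : Finset V)ᶜ := by
      rw [hcomp, compl_compl]
      exact hK1
    have hsub : ({v', w'} : Finset V) ⊆ ({v, w} : Finset V)ᶜ := by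
      intro x hx
      simp only [Finset.mem_insert, Finset.mem_singleton] at hx
      simp only [Finset.mem_compl, Finset.mem_insert, Finset.mem_singleton]
      push_neg
      rcases hx with rfl | rfl
      · exact ⟨fun h => hvv' h.symm, fun h => (Finset.mem_compl.mp hw) (h ▸ hv')⟩
      · exact ⟨fun h => (Finset.mem_compl.mp hw') (h ▸ hv), fun h => hww' h.symm⟩
    exact hAE v' hv' w' hw' (hdown _ _ hsub hK2)
  have hmain : ∃ v₀ : V, ∀ w, w ≠ v₀ → ¬K {v₀, w} := by
    rcases key with h | h
    · obtain ⟨v₀, hv₀⟩ := Finset.card_eq_one.mp h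
      refine ⟨v₀, fun w hw => ?_⟩
      have hwA : w ∈ Aᶜ := by rw [Finset.mem_compl, hv₀]; simpa using hw
      exact hAE v₀ (by rw [hv₀]; simp) w hwA
    · obtain ⟨v₀, hv₀⟩ := Finset.card_eq_one.mp h
      refine ⟨v₀, fun w hw => ?_⟩
      have hwA : w ∈ A := by
        by_contra hc
        have : w ∈ Aᶜ := Finset.mem_compl.mpr hc
        rw [hv₀] at this
        simp at this
        exact hw this
      have := hAE w hwA v₀ (by rw [hv₀]; simp)
      rwa [Finset.pair_comm]
  obtain ⟨v₀, hE⟩ := hmain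
  have hBcompl : ({v₀} : Finset V)ᶜ = Finset.univ.erase v₀ := by
    ext x; simp [Finset.mem_erase, eq_comm]
  have hnB : ¬ K (Finset.univ.erase v₀) := by
    have := (hcomp {v₀}).mp (hvert v₀)
    rwa [hBcompl] at this
  have hcard2 : 2 ≤ (Finset.univ.erase v₀).card := by
    have hVc : 2 ≤ Fintype.card V := by
      obtain ⟨a, ha⟩ := hA0'
      obtain ⟨b, hb⟩ := hAc0'
      have hab : a ≠ b := fun h => (Finset.mem_compl.mp hb) (h ▸ ha)
      exact Fintype.one_lt_card_iff.mpr ⟨a, b, hab⟩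
    have hec : (Finset.univ.erase v₀).card = Fintype.card V - 1 := by
      rw [Finset.card_erase_of_mem (Finset.mem_univ v₀), Finset.card_univ]
    by_contra h
    push_neg at h
    have h1 : (Finset.univ.erase v₀).card = 1 := by omega
    obtain ⟨w, hw⟩ := Finset.card_eq_one.mp h1
    exact hnB (hw ▸ hvert w)
  refine ⟨v₀, hcard2, fun σ => ?_⟩
  constructor
  · intro hK
    by_cases hmem : v₀ ∈ σ
    · left
      ext x
      simp only [Finset.mem_singleton]
      constructor
      · intro hx
        by_contra hne
        refine hE x hne (hdown σ {v₀, x} ?_ hK)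
        intro y hy
        simp only [Finset.mem_insert, Finset.mem_singleton] at hy
        rcases hy with rfl | rfl
        exacts [hmem, hx]
      · rintro rfl; exact hmem
    · right
      constructor
      · intro x hx
        refine Finset.mem_erase.mpr ⟨?_, Finset.mem_univ x⟩
        rintro rfl; exact hmem hx
      · rintro rfl; exact hnB hK
  · rintro (rfl | ⟨hsub, hne⟩)
    · exact hvert v₀
    · obtain ⟨x, hxB, hxs⟩ := Finset.exists_of_ssubset (hsub.ssubset_of_ne hne)
      rw [hcomp]
      intro hKc
      apply hE x (Finset.mem_erase.mp hxB).1
      refine hdown σᶜ {v₀, x} ?_ hKc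
      intro y hy
      simp only [Finset.mem_insert, Finset.mem_singleton] at hy
      rcases hy with rfl | rfl
      · exact Finset.mem_compl.mpr (fun h => (Finset.mem_erase.mp (hsub h)).1 rfl)
      · exact Finset.mem_compl.mpr hxs
end

section
/- There is no group G of order 54 acting transitively on a 27-element set V such that every element of order 2 in G fixes exactly 3 points of V and every nontrivial element of 3-power order acts freely on V. -/
/-!
A point stabilizer has order `54 / 27 = 2`, so each point is fixed by exactly one involution;
as each involution fixes `3` points, double counting gives `3 · #involutions = 27`.
On the other hand a subgroup `H` of order `27` has index `2`, hence contains every element of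
odd order (each is a square), so every element outside `H` is an involution and there are at
least `27` of them.
-/

open Finset MulAction

section

variable {G : Type*} [Group G]

theorem Subgroup.mem_of_index_eq_two_of_odd_orderOf {H : Subgroup G} (hH : H.index = 2) {g : G}
    (hg : Odd (orderOf g)) : g ∈ H := by
  obtain ⟨m, hm⟩ := hg
  have hsq : (g ^ (m + 1)) ^ 2 = g := by
    rw [← pow_mul, show (m + 1) * 2 = orderOf g + 1 by omega, pow_succ, pow_orderOf_eq_one,
      one_mul]
  exact hsq ▸ H.sq_mem_of_index_two hH _

theorem Subgroup.card_filter_orderOf_eq_two_of_card_eq_two [Fintype G] [DecidableEq G]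
    {H : Subgroup G} [DecidablePred (· ∈ H)] (hH : Nat.card H = 2) :
    #{g | g ∈ H ∧ orderOf g = 2} = 1 := by
  have hinvolutions :
      ({g | g ∈ H ∧ orderOf g = 2} : Finset G) = (H : Set G).toFinset.erase 1 := by
    ext g
    simp only [mem_filter, mem_univ, true_and, mem_erase, Set.mem_toFinset]
    constructor
    · rintro ⟨hgH, hg2⟩
      exact ⟨fun h1 => by simp [h1] at hg2, hgH⟩
    · rintro ⟨hg1, hgH⟩
      have hdvd : orderOf g ∣ 2 := hH ▸ H.orderOf_dvd_natCard hgH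
      exact ⟨hgH, ((Nat.dvd_prime Nat.prime_two).mp hdvd).resolve_left
        (orderOf_eq_one_iff.not.mpr hg1)⟩
  rw [hinvolutions, card_erase_of_mem (by simp), Set.toFinset_card,
    ← Nat.card_eq_fintype_card]
  exact hH ▸ rfl

theorem Subgroup.card_le_card_filter_orderOf_eq_two [Fintype G] {H : Subgroup G}
    (hH : H.index = 2) (hord : ∀ g ∉ H, orderOf g = 2) :
    Nat.card H ≤ #{g : G | orderOf g = 2} := by
  classical
  have hcard : #{g : G | g ∈ H} + #{g : G | g ∉ H} = 2 * Nat.card H := by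
    rw [card_filter_add_card_filter_not, card_univ, ← Nat.card_eq_fintype_card,
      ← H.index_mul_card, hH]
  have hH_card : #{g : G | g ∈ H} = Nat.card H := by
    rw [← Fintype.card_subtype, ← Nat.card_eq_fintype_card]
  calc Nat.card H = #{g : G | g ∉ H} := by omega
    _ ≤ #{g : G | orderOf g = 2} := card_le_card fun g hg => by simp_all

variable {V : Type*} [MulAction G V]

theorem MulAction.card_filter_orderOf_eq_two_and_smul_eq [Fintype G] [DecidableEq G]
    [DecidableEq V] {v : V} (hv : Nat.card (stabilizer G v) = 2) :
    #{g : G | orderOf g = 2 ∧ g • v = v} = 1 := by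
  classical
  convert (stabilizer G v).card_filter_orderOf_eq_two_of_card_eq_two hv using 3
  rw [mem_stabilizer_iff, and_comm]

end

theorem no_group_of_order_54_general {G : Type*} [Group G] [Fintype G]
    {V : Type*} [Fintype V] [MulAction G V]
    (hG : Fintype.card G = 54) (hV : Fintype.card V = 27)
    (htrans : MulAction.IsPretransitive G V)
    (hinv : ∀ g : G, orderOf g = 2 → {v : V | g • v = v}.ncard = 3)
    (hord : ∀ g : G, g ≠ 1 → orderOf g = 2 ∨ ∃ k : ℕ, 1 ≤ k ∧ orderOf g = 3 ^ k) :
    False := by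
  classical
  obtain ⟨H, hH⟩ : ∃ H : Subgroup G, Nat.card H = 27 :=
    Sylow.exists_subgroup_card_pow_prime (n := 3) 3
      (by rw [Nat.card_eq_fintype_card, hG]; norm_num)
  have hH_index : H.index = 2 := by
    have := H.index_mul_card
    rw [hH, Nat.card_eq_fintype_card, hG] at this
    omega
  have hinvolutions : Nat.card H ≤ #{g : G | orderOf g = 2} := by
    refine H.card_le_card_filter_orderOf_eq_two hH_index fun g hg => ?_
    refine (hord g (ne_of_mem_of_not_mem H.one_mem hg).symm).resolve_right ?_
    rintro ⟨k, -, hk⟩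
    exact hg (H.mem_of_index_eq_two_of_odd_orderOf hH_index (hk ▸ Odd.pow (by decide)))
  have hstab (v : V) : Nat.card (stabilizer G v) = 2 := by
    have := (stabilizer G v).index_mul_card
    rw [index_stabilizer_of_transitive, Nat.card_eq_fintype_card (α := V), hV,
      Nat.card_eq_fintype_card (α := G), hG] at this
    omega
  have hcount := card_mul_eq_card_mul (fun (g : G) (v : V) => g • v = v)
    (s := {g : G | orderOf g = 2}) (t := univ) (m := 3) (n := 1)
    (fun g hg => by
      rw [← hinv g (mem_filter.mp hg).2, Set.ncard_eq_toFinset_card', Set.toFinset_ofPred]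
      rfl)
    (fun v _ => by
      rw [bipartiteBelow, filter_filter]
      exact card_filter_orderOf_eq_two_and_smul_eq (hstab v))
  rw [card_univ, hV] at hcount
  omega

/-- There is no group `G` of order `54` acting transitively on a `27`-element set `V`
such that every element of order `2` fixes exactly `3` points, every nontrivial element
of `3`-power order acts freely, and every nonidentity element has order `2` or a power
of `3`. -/
theorem no_group_of_order_54 {G : Type*} [Group G] [Fintype G]
    {V : Type*} [Fintype V] [MulAction G V]
    (hG : Fintype.card G = 54) (hV : Fintype.card V = 27)
    (htrans : MulAction.IsPretransitive G V)
    (hinv : ∀ g : G, orderOf g = 2 → {v : V | g • v = v}.ncard = 3)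
    (hfree : ∀ g : G, g ≠ 1 → (∃ k : ℕ, orderOf g = 3 ^ k) → ∀ v : V, g • v ≠ v)
    (hord : ∀ g : G, g ≠ 1 → orderOf g = 2 ∨ ∃ k : ℕ, 1 ≤ k ∧ orderOf g = 3 ^ k) :
    False :=
  no_group_of_order_54_general hG hV htrans hinv hord
end

section
/- Let G be a subgroup of the symmetric group S_27 containing an element of order 11 that acts on {1,...,27} with two 11-cycles (and 5 fixed points), and containing no element of order 11 acting with a single 11-cycle. Then 11² does not divide |G|. -/
open Equiv Equiv.Perm MulAction

lemma eleven_prime : Nat.Prime 11 := by norm_num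

lemma cycleType_of_orderOf_eq_eleven (g : Equiv.Perm (Fin 27)) (hg : orderOf g = 11) :
    g.cycleType = {11} ∨ g.cycleType = {11, 11} := by
  have hall : ∀ n ∈ g.cycleType, n = 11 := by
    intro n hn
    have h2 : 2 ≤ n := Equiv.Perm.two_le_of_mem_cycleType hn
    have hdvd : n ∣ 11 := by
      have := Multiset.dvd_lcm hn
      rwa [Equiv.Perm.lcm_cycleType, hg] at this
    rcases (Nat.Prime.eq_one_or_self_of_dvd eleven_prime n hdvd) with h | h <;> omega
  set k := Multiset.card g.cycleType with hkdef
  have hrep : g.cycleType = Multiset.replicate k 11 :=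
    Multiset.eq_replicate_card.mpr hall
  have hsum : g.cycleType.sum ≤ 27 := by
    rw [Equiv.Perm.sum_cycleType]
    simpa using (Finset.card_le_univ g.support)
  rw [hrep, Multiset.sum_replicate, smul_eq_mul] at hsum
  have hne : g.cycleType ≠ 0 := by
    intro h
    rw [Equiv.Perm.cycleType_eq_zero] at h
    rw [h, orderOf_one] at hg
    omega
  have hk1 : 1 ≤ k := by
    rcases Nat.eq_zero_or_pos k with h | h
    · exact absurd (by rw [hrep, h]; rfl) hne
    · exact h
  have hk2 : k ≤ 2 := by omega
  interval_cases k
  · left; rw [hrep]; rfl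
  · right; rw [hrep]; rfl

lemma not_orderOf_eq_121 (g : Equiv.Perm (Fin 27)) : orderOf g ≠ 121 := by
  intro hg
  have hdvd : g.cycleType.lcm ∣ 11 := by
    apply Multiset.lcm_dvd.mpr
    intro n hn
    have h2 : 2 ≤ n := Equiv.Perm.two_le_of_mem_cycleType hn
    have hle : n ≤ 27 := le_trans (Equiv.Perm.le_card_support_of_mem_cycleType hn)
      (by simpa using (Finset.card_le_univ g.support))
    have hdvd : n ∣ 121 := by
      have := Multiset.dvd_lcm hn
      rwa [Equiv.Perm.lcm_cycleType, hg] at this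
    interval_cases n <;> omega
  rw [Equiv.Perm.lcm_cycleType, hg] at hdvd
  omega

/-- Let `G ≤ S₂₇` contain an element of order `11` acting with two `11`-cycles (and five
fixed points), and no element acting as a single `11`-cycle.  Then `11²` does not divide
`|G|`. -/
theorem eleven_sq_not_dvd (G : Subgroup (Equiv.Perm (Fin 27)))
    (hex : ∃ g ∈ G, g.cycleType = ({11, 11} : Multiset ℕ))
    (hno : ¬ ∃ g ∈ G, g.cycleType = ({11} : Multiset ℕ)) :
    ¬ (11 ^ 2 ∣ Nat.card G) := by
  intro hdvd
  have : Fact (Nat.Prime 11) := ⟨eleven_prime⟩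
  obtain ⟨K, hK⟩ := Sylow.exists_subgroup_card_pow_prime 11 hdvd
  set P : Subgroup (Equiv.Perm (Fin 27)) := Subgroup.map G.subtype K with hP
  have hPG : P ≤ G := by
    rintro x ⟨y, -, rfl⟩
    exact y.2
  have hPcard : Nat.card P = 121 := by
    have he : Nat.card K = Nat.card P :=
      Nat.card_congr (Subgroup.equivMapOfInjective K G.subtype G.subtype_injective).toEquiv
    rw [← he, hK]; norm_num
  -- every nontrivial element of P has cycle type {11,11}
  have hcyc : ∀ a : P, (a : Equiv.Perm (Fin 27)) ≠ 1 →
      (a : Equiv.Perm (Fin 27)).cycleType = ({11, 11} : Multiset ℕ) := by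
    intro a ha
    have hord : orderOf (a : Equiv.Perm (Fin 27)) ∣ 11 ^ 2 := by
      have h1 := orderOf_dvd_natCard (G := P) a
      rw [hPcard] at h1
      rw [orderOf_submonoid]
      exact h1
    obtain ⟨k, hk2, hk⟩ := (Nat.dvd_prime_pow eleven_prime).mp hord
    interval_cases k
    · rw [pow_zero] at hk
      exact absurd (orderOf_eq_one_iff.mp hk) ha
    · rw [pow_one] at hk
      rcases cycleType_of_orderOf_eq_eleven _ hk with h | h
      · exact absurd ⟨_, hPG a.2, h⟩ hno
      · exact h
    · exact absurd (by norm_num at hk ⊢; exact hk)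
        (not_orderOf_eq_121 (a : Equiv.Perm (Fin 27)))
  -- fixed points count
  have hfix : ∀ a : P, (a : Equiv.Perm (Fin 27)) ≠ 1 →
      Fintype.card (fixedBy (Fin 27) a) = 5 := by
    intro a ha
    have hset : fixedBy (Fin 27) a = ((a : Equiv.Perm (Fin 27)).supportᶜ : Finset (Fin 27)) := by
      ext x
      simp [MulAction.fixedBy, Equiv.Perm.notMem_support, Subgroup.smul_def, Equiv.Perm.smul_def]
    have hc := Fintype.card_congr (Equiv.setCongr hset)
    rw [hc]
    have : Fintype.card ((((a : Equiv.Perm (Fin 27)).supportᶜ : Finset (Fin 27))) : Set (Fin 27))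
        = ((a : Equiv.Perm (Fin 27)).supportᶜ).card := Fintype.card_coe _
    rw [this, Finset.card_compl, ← Equiv.Perm.sum_cycleType, hcyc a ha]
    simp
  classical
  have hfix1 : Fintype.card (fixedBy (Fin 27) (1 : P)) = 27 := by
    have hset : fixedBy (Fin 27) (1 : P) = (Set.univ : Set (Fin 27)) := by
      ext x; simp [MulAction.fixedBy]
    rw [Fintype.card_congr ((Equiv.setCongr hset).trans (Equiv.Set.univ _))]
    exact Fintype.card_fin 27
  have hPfin : Fintype.card P = 121 := by
    rw [← Nat.card_eq_fintype_card, hPcard]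
  have hsum : (∑ a : P, Fintype.card (fixedBy (Fin 27) a)) = 627 := by
    have heach : ∀ a : P, Fintype.card (fixedBy (Fin 27) a)
        = (if a = 1 then 22 else 0) + 5 := by
      intro a
      by_cases h : a = 1
      · subst h; rw [hfix1, if_pos rfl]
      · have h' : (a : Equiv.Perm (Fin 27)) ≠ 1 :=
          fun hh => h (OneMemClass.coe_eq_one.mp hh)
        rw [hfix a h', if_neg h]
    rw [Finset.sum_congr rfl (fun a _ => heach a), Finset.sum_add_distrib,
      Finset.sum_ite_eq' Finset.univ (1 : P) (fun _ => 22),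
      Finset.sum_const, Finset.card_univ, hPfin, if_pos (Finset.mem_univ _), smul_eq_mul]
  have : Fintype (Quotient (orbitRel P (Fin 27))) := Fintype.ofFinite _
  have hb := MulAction.sum_card_fixedBy_eq_card_orbits_mul_card_group P (Fin 27)
  rw [hsum, hPfin] at hb
  omega
end

section
/- Let H ≅ C_2³ or Q_8 be a group of order 8 acting on a 27-element set V with 6 orbits, with orbit lengths 8,8,4,4,2,1, such that every element of order 2 fixes exactly 3 points of V. Then a contradiction follows; hence any such group acting with 6 orbits and all involutions having exactly 3 fixed points must have orbit lengths 8,8,8,1,1,1. -/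
/-!
An orbit of length 4 has a stabilizer of order 2, generated by an involution. In `C₂³` and in
`Q₈` every involution is central, so it fixes every point of that orbit, i.e. at least 4 points,
although it fixes exactly 3. Hence all orbit lengths lie in `{1, 2, 8}`, and the only way to
write 27 as a sum of six such numbers is `8 + 8 + 8 + 1 + 1 + 1`.
-/

open MulAction

lemma mem_center_of_forall_sq_eq_one {H : Type*} [Group H] (h2 : ∀ g : H, g ^ 2 = 1) (g : H) :
    g ∈ Subgroup.center H :=
  Subgroup.mem_center_iff.2 fun h =>
    Commute.of_orderOf_dvd_two (fun x => orderOf_dvd_of_pow_eq_one (h2 x)) h g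

lemma QuaternionGroup.mem_center_of_sq_eq_one {g : QuaternionGroup 2} (hg : g ^ 2 = 1) :
    g ∈ Subgroup.center (QuaternionGroup 2) := by
  revert g
  simp only [Subgroup.mem_center_iff]
  decide

lemma mem_center_of_sq_eq_one_of_mulEquiv_quaternionGroup {H : Type*} [Group H]
    (e : H ≃* QuaternionGroup 2) {g : H} (hg : g ^ 2 = 1) : g ∈ Subgroup.center H := by
  have hcent := Subgroup.mem_center_iff.1 <|
    QuaternionGroup.mem_center_of_sq_eq_one (g := e g) (by rw [← map_pow, hg, map_one])
  exact Subgroup.mem_center_iff.2 fun h => e.injective <| by simp only [map_mul, hcent]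

namespace MulAction

variable {G α : Type*} [Group G] [MulAction G α]

lemma orbit_subset_fixedBy_of_mem_center {g : G} (hg : g ∈ Subgroup.center G) {a : α}
    (ha : g • a = a) : orbit G a ⊆ fixedBy α g := by
  rintro _ ⟨h, rfl⟩
  change g • h • a = h • a
  rw [smul_smul, (Subgroup.mem_center_iff.1 hg h).symm, mul_smul, ha]

lemma ncard_orbit_dvd_card (a : α) : (orbit G a).ncard ∣ Nat.card G :=
  index_stabilizer G a ▸ (stabilizer G a).index_dvd_card

lemma exists_orderOf_eq_two_ncard_orbit_le_ncard_fixedBy [Finite G] [Finite α]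
    (hcent : ∀ g : G, orderOf g = 2 → g ∈ Subgroup.center G) {a : α}
    (h2 : 2 ∣ Nat.card (stabilizer G a)) :
    ∃ g : G, orderOf g = 2 ∧ (orbit G a).ncard ≤ (fixedBy α g).ncard := by
  have : Fact (Nat.Prime 2) := ⟨Nat.prime_two⟩
  obtain ⟨g, hg⟩ := exists_prime_orderOf_dvd_card' 2 h2
  rw [← Subgroup.orderOf_coe] at hg
  exact ⟨g, hg, Set.ncard_le_ncard (orbit_subset_fixedBy_of_mem_center (hcent g hg) g.2)⟩

lemma ncard_orbit_eq_one_or_two_or_eight [Finite α] (hG : Nat.card G = 8)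
    (hcent : ∀ g : G, orderOf g = 2 → g ∈ Subgroup.center G)
    (hfix : ∀ g : G, orderOf g = 2 → (fixedBy α g).ncard ≤ 3) (a : α) :
    (orbit G a).ncard = 1 ∨ (orbit G a).ncard = 2 ∨ (orbit G a).ncard = 8 := by
  have : Finite G := Nat.finite_of_card_ne_zero (by omega)
  have hdvd : (orbit G a).ncard ∈ Nat.divisors 8 :=
    Nat.mem_divisors.2 ⟨hG ▸ ncard_orbit_dvd_card a, by norm_num⟩
  have hne4 : (orbit G a).ncard ≠ 4 := fun h4 => by
    have hstab : Nat.card (stabilizer G a) * 4 = 8 := by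
      rw [← h4, ← index_stabilizer, Subgroup.card_mul_index, hG]
    obtain ⟨g, hg, hle⟩ :=
      exists_orderOf_eq_two_ncard_orbit_le_ncard_fixedBy hcent (a := a) ⟨1, by omega⟩
    have := hfix g hg
    omega
  rw [show Nat.divisors 8 = {1, 2, 4, 8} by decide] at hdvd
  simp only [Finset.mem_insert, Finset.mem_singleton] at hdvd
  omega

lemma sum_ncard_orbit [Finite α] [Fintype (orbitRel.Quotient G α)] :
    ∑ q : orbitRel.Quotient G α, q.orbit.ncard = Nat.card α := by
  rw [Nat.card_congr (selfEquivSigmaOrbits' G α), Nat.card_sigma]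
  simp only [Nat.card_coe_set_eq]

lemma ncard_setOf_orbit_ncard_eq (m : ℕ) :
    {s : Set α | (∃ a, s = orbit G a) ∧ s.ncard = m}.ncard =
      {q : orbitRel.Quotient G α | q.orbit.ncard = m}.ncard := by
  rw [← Set.ncard_image_of_injective _ orbitRel.Quotient.orbit_injective]
  congr 1
  ext s
  constructor
  · rintro ⟨⟨a, rfl⟩, hm⟩
    exact ⟨Quotient.mk'' a, hm, orbitRel.Quotient.orbit_mk a⟩
  · rintro ⟨q, hq, rfl⟩
    exact ⟨⟨q.out, q.orbit_eq_orbit_out Quotient.out_eq'⟩, hq⟩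

end MulAction

lemma three_eights_and_three_ones_of_sum_eq {ι : Type*} [Fintype ι] (n : ι → ℕ)
    (hn : ∀ i, n i = 1 ∨ n i = 2 ∨ n i = 8) (hcard : Fintype.card ι = 6)
    (hsum : ∑ i, n i = 27) :
    {i | n i = 8}.ncard = 3 ∧ {i | n i = 1}.ncard = 3 := by
  have hsplit : ∀ i, n i = (if n i = 1 then 1 else 0) + 2 * (if n i = 2 then 1 else 0)
      + 8 * (if n i = 8 then 1 else 0) := fun i => by rcases hn i with h | h | h <;> simp [h]
  have hone : ∀ i, 1 = (if n i = 1 then 1 else 0) + (if n i = 2 then 1 else 0)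
      + (if n i = 8 then 1 else 0) := fun i => by rcases hn i with h | h | h <;> simp [h]
  have hsum' := (Finset.sum_congr rfl fun i _ => hsplit i).symm.trans hsum
  have hcard' : ∑ i : ι, 1 = 6 := by simpa using hcard
  rw [Finset.sum_congr rfl fun i _ => hone i] at hcard'
  simp only [Finset.sum_add_distrib, ← Finset.mul_sum, ← Finset.card_filter] at hsum' hcard'
  simp only [Set.ncard_eq_toFinset_card', Set.toFinset_ofPred]
  omega

/-- Let `H` be a group of order `8` isomorphic to `C₂³` or to `Q₈`, acting on a
`27`-element set `V` with `6` orbits, such that every element of order `2` fixes exactly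
`3` points of `V`.  Then the orbit lengths cannot be `8,8,4,4,2,1`; the orbit lengths
must be `8,8,8,1,1,1`. -/
theorem order_eight_orbit_lengths {H : Type*} [Group H] [Fintype H]
    (hc : Fintype.card H = 8)
    (hiso : (∀ g : H, g ^ 2 = 1) ∨ Nonempty (H ≃* QuaternionGroup 2))
    {V : Type*} [Fintype V] [MulAction H V] (hV : Fintype.card V = 27)
    (horb : Nat.card (MulAction.orbitRel.Quotient H V) = 6)
    (hinv : ∀ g : H, orderOf g = 2 → {v : V | g • v = v}.ncard = 3) :
    {s : Set V | (∃ v : V, s = MulAction.orbit H v) ∧ s.ncard = 8}.ncard = 3 ∧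
    {s : Set V | (∃ v : V, s = MulAction.orbit H v) ∧ s.ncard = 1}.ncard = 3 := by
  have hcent (g : H) (hg : orderOf g = 2) : g ∈ Subgroup.center H := by
    have hsq : g ^ 2 = 1 := hg ▸ pow_orderOf_eq_one g
    rcases hiso with h2 | ⟨⟨e⟩⟩
    exacts [mem_center_of_forall_sq_eq_one h2 g,
      mem_center_of_sq_eq_one_of_mulEquiv_quaternionGroup e hsq]
  have hlen := ncard_orbit_eq_one_or_two_or_eight (α := V) (by rw [Nat.card_eq_fintype_card, hc])
    hcent fun g hg => (hinv g hg).le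
  have : Fintype (orbitRel.Quotient H V) := Fintype.ofFinite _
  simp only [ncard_setOf_orbit_ncard_eq]
  refine three_eights_and_three_ones_of_sum_eq _ (fun q => ?_) ?_ ?_
  · rw [q.orbit_eq_orbit_out Quotient.out_eq']
    exact hlen q.out
  · rwa [← Nat.card_eq_fintype_card]
  · rw [sum_ncard_orbit, Nat.card_eq_fintype_card, hV]
end

section
/- Let K be a 9-neighborly simplicial complex of dimension 16 on a 27-element vertex set V, and let H ≅ C_7 act simplicially on K. If the fixed point complex K^H is 3-neighborly and has exactly 9 vertices, and H acts on V with s orbits of length 7 and t fixed points (s + t = 9, 7s + t = 27), then a contradiction arises: the union of the three length-7 orbits would be a simplex of dimension 20 > 16. -/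
/-- Let `K` be a `9`-neighborly simplicial complex of dimension `16` on a `27`-element
vertex set `V`, with a simplicial action of `H ≅ C₇` having `s` orbits of length `7` and
`t` fixed points where `s + t = 9` and `7s + t = 27`.  If the fixed point complex `K^H`
is `3`-neighborly (on its `9` vertices), then a contradiction arises: the union of the
three length-`7` orbits would be a simplex of dimension `20 > 16`. -/
theorem no_c7_action {V : Type*} [Fintype V] (hV : Fintype.card V = 27)
    (K : Set V → Prop) (hdown : ∀ σ τ : Set V, τ ⊆ σ → K σ → K τ)
    (hdim : ∀ σ : Set V, K σ → σ.ncard ≤ 17)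
    (hneigh : ∀ σ : Set V, σ.ncard ≤ 9 → K σ)
    (H : Type*) [Group H] [IsCyclic H] (hH : Nat.card H = 7)
    [MulAction H V] (hsimp : ∀ (h : H) (σ : Set V), K σ → K ((fun v => h • v) '' σ))
    (s t : ℕ)
    (hs : {x : Set V | (∃ v : V, x = MulAction.orbit H v) ∧ x.ncard = 7}.ncard = s)
    (ht : {v : V | ∀ h : H, h • v = v}.ncard = t)
    (hst : s + t = 9) (hst7 : 7 * s + t = 27)
    (hvert : {x : Set V | ∃ v : V, x = MulAction.orbit H v}.ncard = 9)
    (hneigh3 : ∀ T : Set (Set V), (∀ x ∈ T, ∃ v : V, x = MulAction.orbit H v) →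
      T.ncard ≤ 3 → K (⋃₀ T)) :
    False := by
  have hs3 : s = 3 := by omega
  set T : Set (Set V) := {x : Set V | (∃ v : V, x = MulAction.orbit H v) ∧ x.ncard = 7}
    with hT
  have hKT : K (⋃₀ T) := hneigh3 T (fun x hx => hx.1) (by rw [hs, hs3])
  have hTcard : T.ncard = 3 := by rw [hs, hs3]
  obtain ⟨a, b, c, hab, hac, hbc, hTeq⟩ := Set.ncard_eq_three.mp hTcard
  have ha : a ∈ T := by rw [hTeq]; simp
  have hb : b ∈ T := by rw [hTeq]; simp
  have hc : c ∈ T := by rw [hTeq]; simp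
  have hdisj : ∀ x ∈ T, ∀ y ∈ T, x ≠ y → Disjoint x y := by
    rintro x ⟨⟨v, rfl⟩, -⟩ y ⟨⟨w, rfl⟩, -⟩ hxy
    exact (MulAction.orbit.eq_or_disjoint v w).resolve_left hxy
  have hU : ⋃₀ T = a ∪ (b ∪ c) := by rw [hTeq]; simp [Set.sUnion_insert, Set.union_assoc]
  have hbc' : (b ∪ c).ncard = 14 := by
    rw [Set.ncard_union_eq (hdisj b hb c hc hbc) (Set.toFinite b) (Set.toFinite c),
      hb.2, hc.2]
  have habc : (⋃₀ T).ncard = 21 := by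
    rw [hU, Set.ncard_union_eq (Set.disjoint_union_right.mpr
      ⟨hdisj a ha b hb hab, hdisj a ha c hc hac⟩) (Set.toFinite a) (Set.toFinite _),
      ha.2, hbc']
  have := hdim _ hKT
  omega
end
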